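/- Let w ∈ ℝ^n satisfy |w^{(i)}| ≤ τ for every i. Let S ⊆ [n] be such that σ² = Σ_{i∈S} (w^{(i)})² > 0. Let y be a random vector in {0,1}^n such that the coordinates (y_i)_{i∈S} are i.i.d. uniform random bits, independent of the coordinates (y_i)_{i∉S} (which have an arbitrary joint distribution). Then for all real numbers a ≤ b, Pr[ ⟨w,y⟩ ∈ [a,b] ] ≤ 2(b−a)/σ + 2τ/σ. -/

import Mathlib

/-!
Fejér-kernel smoothing in the style of Esseen. For `T > 0` one has
`T · sinc² (T y) = ∫₀^{2T} (1 - t / 2T) cos (t y) dt`; this is nonnegative and at least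
`T (1 - (T Λ)² / 3)` for `|y| ≤ Λ`. Summed over the cube `{0,1}^k`, the number of points `x` with
`∑ cᵢ xᵢ` within `Λ` of a centre `m` is therefore bounded by an integral of
`∑ₓ cos (t (∑ cᵢ xᵢ - m))`, whose modulus is `2^k ∏ |cos (t cᵢ / 2)| ≤ 2^k exp (-σ² t² / 8)` as long
as `T τ ≤ π / 2`. The Gaussian integral gives the bound `2^k √(2π) / σ`, and `T = π / 2τ` or
`T = 1 / Λ` turns it into `2 (b - a) / σ + 2 τ / σ`. Conditioning on the coordinates outside `S`
reduces the theorem to this case.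
-/

open MeasureTheory
open scoped ENNReal

noncomputable section

/-- The real value (0 or 1) of a bit. -/
def bval (b : Bool) : ℝ := if b then 1 else 0

/-- The distribution of a biased coin on `Bool` with probability `p` of `true`. -/
def coin (p : ℝ) : Measure Bool :=
  (PMF.bernoulli (min (Real.toNNReal p) 1) (min_le_right _ _)).toMeasure

open Real Finset

instance (p : ℝ) : IsProbabilityMeasure (coin p) := PMF.toMeasure.isProbabilityMeasure _

lemma coin_half_singleton (b : Bool) : coin (1 / 2) {b} = 2⁻¹ := by
  have hp : min (Real.toNNReal (1 / 2)) 1 = 2⁻¹ := by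
    rw [one_div, Real.toNNReal_inv, Real.toNNReal_ofNat]
    exact min_eq_left (inv_le_one_of_one_le₀ one_le_two)
  rw [coin, PMF.toMeasure_apply_singleton _ _ (measurableSet_singleton b)]
  simp only [PMF.bernoulli, PMF.ofFintype_apply, hp]
  cases b <;> simp [ENNReal.one_sub_inv_two]

lemma pi_coin_half_apply {ι : Type*} [Fintype ι] (A : Set (ι → Bool)) :
    ((Measure.pi fun _ : ι => coin (1 / 2)) A).toReal = A.ncard / 2 ^ Fintype.card ι := by
  classical
  rw [← Set.coe_toFinset A, ← sum_measure_singleton, Set.ncard_coe_finset]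
  simp only [Measure.pi_singleton, coin_half_singleton, prod_const, sum_const, card_univ]
  simp [div_eq_mul_inv]

lemma norm_one_add_exp_mul_I (θ : ℝ) :
    ‖1 + Complex.exp (θ * Complex.I)‖ = 2 * |cos (θ / 2)| := by
  have h : 1 + Complex.exp (θ * Complex.I)
      = Complex.exp ((θ / 2 : ℝ) * Complex.I) * ((2 * cos (θ / 2) : ℝ) : ℂ) := by
    push_cast
    rw [Complex.cos, mul_div_cancel₀ _ two_ne_zero, mul_add, ← Complex.exp_add,
      ← Complex.exp_add, ← Complex.exp_zero]
    ring_nf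
  rw [h, norm_mul, Complex.norm_exp_ofReal_mul_I, one_mul, Complex.norm_real, Real.norm_eq_abs,
    abs_mul, abs_two]

lemma abs_sum_cos_le_prod {ι : Type*} [Fintype ι] [DecidableEq ι] (c : ι → ℝ) (t m : ℝ) :
    |∑ x : ι → Bool, cos (t * (∑ i, c i * bval (x i) - m))|
      ≤ 2 ^ Fintype.card ι * ∏ i, |cos (t * c i / 2)| := by
  have hfactor : ∀ i, 1 + Complex.exp ((t * c i : ℝ) * Complex.I)
      = ∑ b : Bool, Complex.exp ((t * (c i * bval b) : ℝ) * Complex.I) := by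
    simp [bval, add_comm]
  have hsum : ∑ x : ι → Bool, cos (t * (∑ i, c i * bval (x i) - m))
      = (Complex.exp ((-(t * m) : ℝ) * Complex.I)
          * ∏ i, (1 + Complex.exp ((t * c i : ℝ) * Complex.I))).re := by
    rw [prod_congr rfl fun i _ => hfactor i, Fintype.prod_sum, mul_sum, Complex.re_sum]
    refine sum_congr rfl fun x _ => ?_
    rw [← Complex.exp_sum, ← Complex.exp_add, ← Complex.exp_ofReal_mul_I_re]
    congr 3
    push_cast
    rw [mul_sub, mul_sum, ← sum_mul]
    ring
  calc _ ≤ ‖Complex.exp ((-(t * m) : ℝ) * Complex.I)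
          * ∏ i, (1 + Complex.exp ((t * c i : ℝ) * Complex.I))‖ :=
        hsum ▸ Complex.abs_re_le_norm _
    _ = ∏ i, 2 * |cos (t * c i / 2)| := by
        simp only [norm_mul, Complex.norm_exp_ofReal_mul_I, one_mul, norm_prod,
          norm_one_add_exp_mul_I]
    _ = _ := by rw [prod_mul_distrib, prod_const, card_univ]

lemma cos_le_exp_neg_sq_div_two {θ : ℝ} (h0 : 0 ≤ θ) (h1 : θ ≤ π / 2) :
    cos θ ≤ exp (-(θ ^ 2 / 2)) := by
  have hanti : AntitoneOn (fun x => cos x * exp (x ^ 2 / 2)) (Set.Icc 0 (π / 2)) := by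
    apply antitoneOn_of_deriv_nonpos (convex_Icc _ _) (by fun_prop) (by fun_prop)
    intro x hx
    rw [interior_Icc] at hx
    have hderiv : deriv (fun x => cos x * exp (x ^ 2 / 2)) x
        = (x * cos x - sin x) * exp (x ^ 2 / 2) := by
      refine ((hasDerivAt_cos x).mul ((hasDerivAt_pow 2 x).div_const 2).exp).deriv.trans ?_
      push_cast
      ring
    have hcos : 0 < cos x := cos_pos_of_mem_Ioo ⟨by linarith [hx.1, pi_pos], hx.2⟩
    have htan : x * cos x ≤ sin x := by
      rw [← le_div_iff₀ hcos, ← tan_eq_sin_div_cos]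
      exact le_tan hx.1.le hx.2
    rw [hderiv]
    exact mul_nonpos_of_nonpos_of_nonneg (by linarith) (exp_pos _).le
  have h := mul_le_mul_of_nonneg_right (hanti ⟨le_rfl, by positivity⟩ ⟨h0, h1⟩ h0)
    (exp_pos (-(θ ^ 2 / 2))).le
  simpa [mul_assoc, ← exp_add] using h

lemma abs_cos_le_exp_neg_sq_div_two {θ : ℝ} (h : |θ| ≤ π / 2) :
    |cos θ| ≤ exp (-(θ ^ 2 / 2)) := by
  rw [← cos_abs, ← sq_abs θ,
    abs_of_nonneg (cos_nonneg_of_mem_Icc ⟨by linarith [abs_nonneg θ, pi_pos], h⟩)]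
  exact cos_le_exp_neg_sq_div_two (abs_nonneg θ) h

lemma one_sub_sq_div_six_le_sinc (v : ℝ) : 1 - v ^ 2 / 6 ≤ sinc v := by
  rcases eq_or_ne v 0 with rfl | hv
  · simp
  have h : |1 - sin v / v| ≤ v ^ 2 / 6 := by
    rw [show 1 - sin v / v = (v - sin v) / v by field_simp, abs_div,
      div_le_iff₀ (abs_pos.2 hv)]
    calc |v - sin v| ≤ |v| ^ 3 / 6 := abs_sub_sin_le v
      _ = v ^ 2 / 6 * |v| := by rw [pow_succ, sq_abs]; ring
  rw [sinc_of_ne_zero hv]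
  linarith [le_abs_self (1 - sin v / v)]

lemma one_sub_sq_div_three_le_sinc_sq (v : ℝ) : 1 - v ^ 2 / 3 ≤ sinc v ^ 2 := by
  have hsinc := one_sub_sq_div_six_le_sinc v
  rcases le_or_gt 0 (1 - v ^ 2 / 6) with hpos | hneg
  · nlinarith [pow_le_pow_left₀ hpos hsinc 2]
  · nlinarith [sq_nonneg (sinc v)]

lemma integral_fejer_mul_cos {T : ℝ} (hT : 0 < T) (y : ℝ) :
    ∫ t in (0 : ℝ)..2 * T, (1 - t / (2 * T)) * cos (t * y) = T * sinc (T * y) ^ 2 := by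
  rcases eq_or_ne y 0 with rfl | hy
  · simp only [mul_zero, cos_zero, mul_one, sinc_zero, one_pow]
    rw [intervalIntegral.integral_sub intervalIntegrable_const
      (intervalIntegral.intervalIntegrable_id.div_const _), intervalIntegral.integral_div,
      integral_id, intervalIntegral.integral_const, smul_eq_mul]
    field_simp
    ring
  have hF : ∀ t, HasDerivAt (fun t => (1 - t / (2 * T)) * sin (t * y) / y
      - cos (t * y) / (2 * T * y ^ 2)) ((1 - t / (2 * T)) * cos (t * y)) t := by
    intro t
    have hty : HasDerivAt (fun t => t * y) y t := by simpa using (hasDerivAt_id t).mul_const y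
    refine (((((hasDerivAt_id' t).div_const (2 * T)).const_sub 1).mul hty.sin).div_const y
      |>.sub (hty.cos.div_const (2 * T * y ^ 2))).congr_deriv ?_
    field_simp
    ring
  rw [intervalIntegral.integral_eq_sub_of_hasDerivAt (fun t _ => hF t)
    (by apply Continuous.intervalIntegrable; fun_prop), sinc_of_ne_zero (mul_ne_zero hT.ne' hy)]
  have hcos : cos (2 * T * y) = 1 - 2 * sin (T * y) ^ 2 := by
    rw [mul_assoc, cos_two_mul, cos_sq']; ring
  simp only [hcos, zero_mul, sin_zero, mul_zero, cos_zero, zero_div, sub_zero]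
  field_simp
  ring

lemma integral_exp_neg_mul_sq_le {β X : ℝ} (hβ : 0 < β) (hX : 0 ≤ X) :
    ∫ t in (0 : ℝ)..X, exp (-β * t ^ 2) ≤ √(π / β) / 2 := by
  rw [intervalIntegral.integral_of_le hX, ← integral_gaussian_Ioi β]
  exact setIntegral_mono_set (integrable_exp_neg_mul_sq hβ).integrableOn
    (.of_forall fun t => (exp_pos _).le) Set.Ioc_subset_Ioi_self.eventuallyLE

section UniformBits

variable {ι : Type*} [Fintype ι] {c : ι → ℝ} {τ T : ℝ}

lemma prod_abs_cos_le_exp (hc : ∀ i, |c i| ≤ τ) (hTτ : T * τ ≤ π / 2) {t : ℝ}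
    (ht : t ∈ Set.Icc 0 (2 * T)) :
    ∏ i, |cos (t * c i / 2)| ≤ exp (-((∑ i, c i ^ 2) / 8) * t ^ 2) := by
  have hθ : ∀ i, |t * c i / 2| ≤ π / 2 := fun i => by
    rw [abs_div, abs_mul, abs_of_nonneg ht.1, abs_two]
    nlinarith [mul_le_mul ht.2 (hc i) (abs_nonneg _) (by linarith [ht.1, ht.2])]
  calc ∏ i, |cos (t * c i / 2)| ≤ ∏ i, exp (-((t * c i / 2) ^ 2 / 2)) :=
        prod_le_prod (fun _ _ => abs_nonneg _) fun i _ => abs_cos_le_exp_neg_sq_div_two (hθ i)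
    _ = exp (-((∑ i, c i ^ 2) / 8) * t ^ 2) := by
        rw [← exp_sum, sum_div, neg_mul, sum_mul, ← sum_neg_distrib]
        congr 2 with i
        ring

lemma sum_sinc_sq_le [DecidableEq ι] (hc : ∀ i, |c i| ≤ τ) (hσ : 0 < ∑ i, c i ^ 2)
    (hT : 0 < T) (hTτ : T * τ ≤ π / 2) (m : ℝ) :
    T * ∑ x : ι → Bool, sinc (T * (∑ i, c i * bval (x i) - m)) ^ 2
      ≤ 2 ^ Fintype.card ι * (√(2 * π) / √(∑ i, c i ^ 2)) := by
  set σ2 := ∑ i, c i ^ 2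
  have hpoint : ∀ t ∈ Set.Icc 0 (2 * T),
      (1 - t / (2 * T)) * ∑ x : ι → Bool, cos (t * (∑ i, c i * bval (x i) - m))
        ≤ 2 ^ Fintype.card ι * exp (-(σ2 / 8) * t ^ 2) := by
    intro t ht
    have hw0 : 0 ≤ 1 - t / (2 * T) := by rw [sub_nonneg, div_le_one (by linarith)]; exact ht.2
    have hw1 : 1 - t / (2 * T) ≤ 1 := by linarith [div_nonneg ht.1 (by linarith : 0 ≤ 2 * T)]
    calc _ ≤ (1 - t / (2 * T)) * |∑ x : ι → Bool, cos (t * (∑ i, c i * bval (x i) - m))| :=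
          mul_le_mul_of_nonneg_left (le_abs_self _) hw0
      _ ≤ 1 * (2 ^ Fintype.card ι * ∏ i, |cos (t * c i / 2)|) :=
          mul_le_mul hw1 (abs_sum_cos_le_prod c t m) (abs_nonneg _) zero_le_one
      _ ≤ _ := by
          rw [one_mul]
          exact mul_le_mul_of_nonneg_left (prod_abs_cos_le_exp hc hTτ ht) (by positivity)
  calc T * ∑ x : ι → Bool, sinc (T * (∑ i, c i * bval (x i) - m)) ^ 2
      = ∫ t in (0 : ℝ)..2 * T,
          (1 - t / (2 * T)) * ∑ x : ι → Bool, cos (t * (∑ i, c i * bval (x i) - m)) := by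
        simp_rw [mul_sum, ← integral_fejer_mul_cos hT]
        rw [intervalIntegral.integral_finsetSum]
        intro x _
        apply Continuous.intervalIntegrable
        fun_prop
    _ ≤ ∫ t in (0 : ℝ)..2 * T, 2 ^ Fintype.card ι * exp (-(σ2 / 8) * t ^ 2) := by
        apply intervalIntegral.integral_mono_on (by linarith) _ _ hpoint <;>
          apply Continuous.intervalIntegrable <;> fun_prop
    _ ≤ 2 ^ Fintype.card ι * (√(π / (σ2 / 8)) / 2) := by
        rw [intervalIntegral.integral_const_mul]
        gcongr
        exact integral_exp_neg_mul_sq_le (by positivity) (by linarith)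
    _ = 2 ^ Fintype.card ι * (√(2 * π) / √σ2) := by
        rw [show π / (σ2 / 8) = 2 ^ 2 * ((2 * π) / σ2) by field_simp; ring,
          sqrt_mul (by positivity), sqrt_sq zero_le_two, sqrt_div (by positivity)]
        ring

lemma card_smallBall_mul_le [DecidableEq ι] (hc : ∀ i, |c i| ≤ τ) (hσ : 0 < ∑ i, c i ^ 2)
    (hT : 0 < T) (hTτ : T * τ ≤ π / 2) (a b : ℝ) :
    #{x : ι → Bool | a ≤ ∑ i, c i * bval (x i) ∧ ∑ i, c i * bval (x i) ≤ b}
        * (T * (1 - (T * ((b - a) / 2)) ^ 2 / 3))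
      ≤ 2 ^ Fintype.card ι * (√(2 * π) / √(∑ i, c i ^ 2)) := by
  calc _ = ∑ x ∈ {x : ι → Bool | a ≤ ∑ i, c i * bval (x i) ∧ ∑ i, c i * bval (x i) ≤ b},
        T * (1 - (T * ((b - a) / 2)) ^ 2 / 3) := by rw [sum_const, nsmul_eq_mul]
    _ ≤ ∑ x ∈ {x : ι → Bool | a ≤ ∑ i, c i * bval (x i) ∧ ∑ i, c i * bval (x i) ≤ b},
        T * sinc (T * (∑ i, c i * bval (x i) - (a + b) / 2)) ^ 2 := by
      refine sum_le_sum fun x hx => ?_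
      obtain ⟨hax, hxb⟩ := (mem_filter.1 hx).2
      have hdist : (T * (∑ i, c i * bval (x i) - (a + b) / 2)) ^ 2 ≤ (T * ((b - a) / 2)) ^ 2 := by
        rw [mul_pow, mul_pow]
        refine mul_le_mul_of_nonneg_left ?_ (sq_nonneg T)
        apply sq_le_sq' <;> linarith
      have := one_sub_sq_div_three_le_sinc_sq (T * (∑ i, c i * bval (x i) - (a + b) / 2))
      gcongr
      linarith
    _ ≤ ∑ x : ι → Bool, T * sinc (T * (∑ i, c i * bval (x i) - (a + b) / 2)) ^ 2 :=
      sum_le_sum_of_subset_of_nonneg (subset_univ _) fun _ _ _ => by positivity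
    _ ≤ _ := by rw [← mul_sum]; exact sum_sinc_sq_le hc hσ hT hTτ _

end UniformBits

lemma exists_fejer_scale {τ Λ : ℝ} (hτ : 0 < τ) (hΛ : 0 ≤ Λ) :
    ∃ T, 0 < T ∧ T * τ ≤ π / 2 ∧ √(2 * π) ≤ T * (1 - (T * Λ) ^ 2 / 3) * (4 * Λ + 2 * τ) := by
  have hπ := pi_gt_three
  have hπ' := pi_lt_d2
  rcases le_or_gt (π * Λ) (2 * τ) with hsmall | hlarge
  · refine ⟨π / (2 * τ), by positivity, le_of_eq (by field_simp), ?_⟩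
    have hu0 : 0 ≤ π / (2 * τ) * Λ := by positivity
    have hu1 : π / (2 * τ) * Λ ≤ 1 := by
      rw [div_mul_eq_mul_div]
      exact (div_le_one (by positivity)).2 hsmall
    set u := π / (2 * τ) * Λ
    have hexpand : π / (2 * τ) * (1 - u ^ 2 / 3) * (4 * Λ + 2 * τ)
        = (1 - u ^ 2 / 3) * (4 * u + π) := by
      simp only [u]; field_simp
    have hπu : π ≤ (1 - u ^ 2 / 3) * (4 * u + π) := by
      nlinarith [mul_nonneg hu0 (sub_nonneg.2 hu1)]
    rw [hexpand, sqrt_le_left (by linarith)]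
    nlinarith
  · have hΛ0 : 0 < Λ := by nlinarith
    refine ⟨1 / Λ, by positivity, ?_, ?_⟩
    · rw [one_div_mul_eq_div, div_le_iff₀ hΛ0]; linarith
    · have hexpand : 1 / Λ * (1 - (1 / Λ * Λ) ^ 2 / 3) * (4 * Λ + 2 * τ)
          = 8 / 3 + 4 * τ / (3 * Λ) := by
        field_simp; ring
      rw [hexpand, sqrt_le_left (by positivity)]
      have hd : 0 < 4 * τ / (3 * Λ) := by positivity
      nlinarith [mul_pos hd hd]

theorem pi_coin_half_smallBall_le {ι : Type*} [Fintype ι] {c : ι → ℝ} {τ : ℝ}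
    (hc : ∀ i, |c i| ≤ τ) (hσ : 0 < ∑ i, c i ^ 2) {a b : ℝ} (hab : a ≤ b) :
    ((Measure.pi fun _ : ι => coin (1 / 2))
        {x | a ≤ ∑ i, c i * bval (x i) ∧ ∑ i, c i * bval (x i) ≤ b}).toReal
      ≤ 2 * (b - a) / √(∑ i, c i ^ 2) + 2 * τ / √(∑ i, c i ^ 2) := by
  classical
  have hτ : 0 < τ := by
    obtain ⟨i, -, hi⟩ := exists_ne_zero_of_sum_ne_zero hσ.ne'
    exact (abs_pos.2 (pow_ne_zero_iff two_ne_zero |>.1 hi)).trans_le (hc i)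
  obtain ⟨T, hT, hTτ, hscale⟩ := exists_fejer_scale hτ (by linarith : 0 ≤ (b - a) / 2)
  have hcard := card_smallBall_mul_le hc hσ hT hTτ a b
  set K := T * (1 - (T * ((b - a) / 2)) ^ 2 / 3)
  have hK : 0 < K := pos_of_mul_pos_left ((sqrt_pos.2 (by positivity)).trans_le hscale)
    (by linarith)
  rw [pi_coin_half_apply, Set.ncard_eq_toFinset_card', Set.toFinset_ofPred,
    div_le_iff₀ (by positivity)]
  refine le_of_mul_le_mul_right ?_ hK
  calc _ ≤ 2 ^ Fintype.card ι * (√(2 * π) / √(∑ i, c i ^ 2)) := hcard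
    _ ≤ 2 ^ Fintype.card ι * (K * (4 * ((b - a) / 2) + 2 * τ) / √(∑ i, c i ^ 2)) := by gcongr
    _ = _ := by ring

lemma sum_mul_bval_dite {ι : Type*} [Fintype ι] (p : ι → Prop) [DecidablePred p] (w : ι → ℝ)
    (x : {i // p i} → Bool) (z : {i // ¬p i} → Bool) :
    ∑ i, w i * bval (if h : p i then x ⟨i, h⟩ else z ⟨i, h⟩)
      = ∑ i : {i // p i}, w i * bval (x i) + ∑ i : {i // ¬p i}, w i * bval (z i) := by
  rw [← Fintype.sum_subtype_add_sum_subtype p]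
  congr 1 <;> refine Fintype.sum_congr _ _ fun i => ?_
  · rw [dif_pos i.2]
  · rw [dif_neg i.2]

lemma prod_apply_le_of_forall_slice_le {α β : Type*} [MeasurableSpace α] [MeasurableSpace β]
    {μ : Measure α} {ν : Measure β} [SFinite μ] [IsProbabilityMeasure ν] {s : Set (α × β)}
    (hs : MeasurableSet s) {ε : ℝ≥0∞} (h : ∀ y, μ ((fun x => (x, y)) ⁻¹' s) ≤ ε) :
    μ.prod ν s ≤ ε := by
  rw [Measure.prod_apply_symm hs]
  calc _ ≤ ∫⁻ _, ε ∂ν := lintegral_mono h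
    _ = ε := by simp

theorem stmt_18_general (n : ℕ) (τ : ℝ) (w : Fin n → ℝ)
    (hw : ∀ i, |w i| ≤ τ)
    (S : Finset (Fin n))
    (hσ : 0 < ∑ i ∈ S, (w i) ^ 2)
    (μ : Measure (Fin n → Bool))
    (ν : Measure ({i : Fin n // i ∉ S} → Bool)) (hν : IsProbabilityMeasure ν)
    (hμ : μ = Measure.map
      (fun p : ({i : Fin n // i ∈ S} → Bool) × ({i : Fin n // i ∉ S} → Bool) =>
        fun i : Fin n => if h : i ∈ S then p.1 ⟨i, h⟩ else p.2 ⟨i, h⟩)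
      ((Measure.pi fun _ : {i : Fin n // i ∈ S} => coin (1 / 2)).prod ν)) :
    ∀ a b : ℝ, a ≤ b →
      (μ {y | a ≤ ∑ i, w i * bval (y i) ∧ ∑ i, w i * bval (y i) ≤ b}).toReal
        ≤ 2 * (b - a) / Real.sqrt (∑ i ∈ S, (w i) ^ 2) +
          2 * τ / Real.sqrt (∑ i ∈ S, (w i) ^ 2) := by
  intro a b hab
  have hslice (r : ℝ) := pi_coin_half_smallBall_le (ι := {i // i ∈ S}) (c := fun i => w i)
    (fun i => hw i) (by rwa [sum_coe_sort S fun i => w i ^ 2]) (a := a - r) (b := b - r)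
    (by linarith)
  simp only [sum_coe_sort S fun i => w i ^ 2, sub_sub_sub_cancel_right] at hslice
  rw [hμ, Measure.map_apply (measurable_of_finite _) (Set.toFinite _).measurableSet]
  refine ENNReal.toReal_le_of_le_ofReal (ENNReal.toReal_nonneg.trans (hslice 0))
    (prod_apply_le_of_forall_slice_le (Set.toFinite _).measurableSet fun z => ?_)
  rw [← ENNReal.ofReal_toReal (measure_ne_top _ _)]
  refine ENNReal.ofReal_le_ofReal
    (le_of_eq_of_le ?_ (hslice (∑ i : {i // i ∉ S}, w i * bval (z i))))
  congr 2 with x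
  simp only [Set.mem_preimage, Set.mem_ofPred_eq, sum_mul_bval_dite, sub_le_iff_le_add,
    le_sub_iff_add_le]
  -- the two sides differ only in the `Fintype` instance on `{i // i ∈ S}`
  convert Iff.rfl

/-- Berry–Esseen small-ball bound: let `w ∈ ℝ^n` with `|wⁱ| ≤ τ` and let
`S ⊆ [n]` with `σ² = Σ_{i∈S} (wⁱ)² > 0`.  If the distribution `μ` of `y ∈ {0,1}^n` is such
that the coordinates in `S` are i.i.d. uniform bits independent of the (arbitrary) remaining
coordinates, then for all `a ≤ b`, `Pr[⟨w,y⟩ ∈ [a,b]] ≤ 2(b−a)/σ + 2τ/σ`. -/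
theorem stmt_18 (n : ℕ) (τ : ℝ) (w : Fin n → ℝ)
    (hw : ∀ i, |w i| ≤ τ)
    (S : Finset (Fin n))
    (hσ : 0 < ∑ i ∈ S, (w i) ^ 2)
    (μ : Measure (Fin n → Bool)) [IsProbabilityMeasure μ]
    (ν : Measure ({i : Fin n // i ∉ S} → Bool)) (hν : IsProbabilityMeasure ν)
    (hμ : μ = Measure.map
      (fun p : ({i : Fin n // i ∈ S} → Bool) × ({i : Fin n // i ∉ S} → Bool) =>
        fun i : Fin n => if h : i ∈ S then p.1 ⟨i, h⟩ else p.2 ⟨i, h⟩)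
      ((Measure.pi fun _ : {i : Fin n // i ∈ S} => coin (1 / 2)).prod ν)) :
    ∀ a b : ℝ, a ≤ b →
      (μ {y | a ≤ ∑ i, w i * bval (y i) ∧ ∑ i, w i * bval (y i) ≤ b}).toReal
        ≤ 2 * (b - a) / Real.sqrt (∑ i ∈ S, (w i) ^ 2) +
          2 * τ / Real.sqrt (∑ i ∈ S, (w i) ^ 2) :=
  stmt_18_general n τ w hw S hσ μ ν hν hμ
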